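/- arXiv:1610.02212 — 2 statements merged into one kernel-verified Lean document; each statement's English description precedes it below -/
import Mathlib

section
/- If n is odd and gcd(n, t) = 1, with n ≥ 3 and 2 ≤ 2t < n, then DP(n, t) has a Hamilton cycle. -/
inductive DPVert (n : ℕ) : Type
  | x : ZMod n → DPVert n
  | u : ZMod n → DPVert n
  | v : ZMod n → DPVert n
  | y : ZMod n → DPVert n
  deriving DecidableEq

def DP (n t : ℕ) : SimpleGraph (DPVert n) :=
  SimpleGraph.fromRel (fun a b =>
    (∃ i, a = DPVert.x i ∧ b = DPVert.x (i + 1)) ∨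
    (∃ i, a = DPVert.y i ∧ b = DPVert.y (i + 1)) ∨
    (∃ i, a = DPVert.x i ∧ b = DPVert.u i) ∨
    (∃ i, a = DPVert.y i ∧ b = DPVert.v i) ∨
    (∃ i, a = DPVert.u i ∧ b = DPVert.v (i + (t : ZMod n))) ∨
    (∃ i, a = DPVert.v i ∧ b = DPVert.u (i + (t : ZMod n))))

/-!
For odd `n` and `t` prime to `n`, the spokes `u_i v_{i+t}` and `v_i u_{i+t}` form a single
`2n`-cycle `u_0, v_t, u_{2t}, v_{3t}, …`; `DP.spoke j` is its `j`-th vertex, and it depends only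
on `j mod 2n`. Fix an even `a < 2n` with `a t ≡ 1 (mod n)`. The Hamilton cycle runs around the
outer rim from `x_1` to `x_0`, forwards along the spoke cycle from `u_0 = spoke 0` to
`v_{1-t} = spoke (a-1)`, around the inner rim from `y_{1-t}` to `y_{-t}`, and backwards along the
spoke cycle from `v_{-t} = spoke (-1)` to `u_1 = spoke (a-2n)`, which is adjacent to `x_1`.
The two spoke arcs use the `2n` consecutive indices `a-2n, …, a-1`, so no vertex repeats.
-/

open SimpleGraph

theorem ZMod.eq_of_intCast_eq_of_abs_sub_lt {m : ℕ} {j k : ℤ} (h : (j : ZMod m) = k)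
    (hlt : |j - k| < m) : j = k :=
  sub_eq_zero.mp <|
    Int.eq_zero_of_abs_lt_dvd ((ZMod.intCast_eq_intCast_iff_dvd_sub _ _ _).mp h.symm) hlt

namespace SimpleGraph

variable {V : Type*} [DecidableEq V] {G : SimpleGraph V}

theorem exists_isHamiltonianCycle_of_injOn [Fintype V] {m : ℕ} (hm : 2 < m)
    (hcard : Fintype.card V = m) (f : ℕ → V) (hinj : Set.InjOn f (Set.Iio m))
    (hadj : ∀ i, i + 1 < m → G.Adj (f i) (f (i + 1))) (hclose : G.Adj (f (m - 1)) (f 0)) :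
    ∃ (a : V) (w : G.Walk a a), w.IsHamiltonianCycle := by
  have hadj' : ∀ i j : Fin m, (i - j).val = 1 → G.Adj (f j) (f i) := by
    intro i j h
    rcases le_or_gt j i with hji | hij
    · rw [Fin.coe_sub_iff_le.mpr hji] at h
      simpa [show i.val = j.val + 1 by omega] using hadj j (by omega)
    · rw [Fin.coe_sub_iff_lt.mpr hij] at h
      simpa [show j.val = m - 1 by omega, show i.val = 0 by omega] using hclose
  have hcopy : cycleGraph m ⊑ G :=
    ⟨Hom.toCopy ⟨fun i ↦ f i, fun h ↦ (cycleGraph_adj'.mp h).elim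
      (fun h ↦ (hadj' _ _ h).symm) (hadj' _ _)⟩
      fun i j h ↦ Fin.ext (hinj i.isLt j.isLt h)⟩
  obtain ⟨a, p, hp, hlen⟩ := (cycleGraph_isContained_iff hm).mp hcopy
  exact ⟨a, p, Walk.isHamiltonianCycle_iff_isCycle_and_length_eq.mpr ⟨hp, hlen.trans hcard.symm⟩⟩

end SimpleGraph

namespace DPVert

def equivSum (n : ℕ) : DPVert n ≃ (ZMod n ⊕ ZMod n) ⊕ (ZMod n ⊕ ZMod n) where
  toFun
    | .x i => .inl (.inl i)
    | .u i => .inl (.inr i)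
    | .v i => .inr (.inl i)
    | .y i => .inr (.inr i)
  invFun
    | .inl (.inl i) => .x i
    | .inl (.inr i) => .u i
    | .inr (.inl i) => .v i
    | .inr (.inr i) => .y i
  left_inv a := by cases a <;> rfl
  right_inv s := by rcases s with (i | i) | (i | i) <;> rfl

variable {n : ℕ} [NeZero n]

instance : Fintype (DPVert n) := Fintype.ofEquiv _ (equivSum n).symm

theorem card_eq : Fintype.card (DPVert n) = 4 * n := by
  simp [Fintype.card_congr (equivSum n)]
  ring

end DPVert

namespace DP

variable {n t a : ℕ}

theorem adj_x_succ [Fact (1 < n)] (i : ZMod n) : (DP n t).Adj (.x i) (.x (i + 1)) := by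
  simp [DP]

theorem adj_y_succ [Fact (1 < n)] (i : ZMod n) : (DP n t).Adj (.y i) (.y (i + 1)) := by
  simp [DP]

theorem adj_x_u (i : ZMod n) : (DP n t).Adj (.x i) (.u i) := by
  simp [DP]

theorem adj_y_v (i : ZMod n) : (DP n t).Adj (.y i) (.v i) := by
  simp [DP]

theorem adj_u_v (i : ZMod n) : (DP n t).Adj (.u i) (.v (i + t)) := by
  simp [DP]

theorem adj_v_u (i : ZMod n) : (DP n t).Adj (.v i) (.u (i + t)) := by
  simp [DP]

def spoke (n t : ℕ) (j : ℤ) : DPVert n :=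
  if Even j then .u (j * t) else .v (j * t)

theorem spoke_adj_succ (j : ℤ) : (DP n t).Adj (spoke n t j) (spoke n t (j + 1)) := by
  by_cases hj : Even j
  · simpa [spoke, hj, Int.even_add_one, ← Int.not_even_iff_odd, add_mul] using
      adj_u_v (t := t) ((j : ZMod n) * (t : ZMod n))
  · simpa [spoke, hj, Int.even_add_one, ← Int.not_even_iff_odd, add_mul] using
      adj_v_u (t := t) ((j : ZMod n) * (t : ZMod n))

theorem spoke_ne_x (j : ℤ) (i : ZMod n) : spoke n t j ≠ .x i := by
  unfold spoke; split_ifs <;> simp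

theorem spoke_ne_y (j : ℤ) (i : ZMod n) : spoke n t j ≠ .y i := by
  unfold spoke; split_ifs <;> simp

theorem eq_of_spoke_eq (hn : Odd n) (ht : n.Coprime t) {j k : ℤ}
    (h : spoke n t j = spoke n t k) (hlt : |j - k| < 2 * n) : j = k := by
  have hsame : (Even j ↔ Even k) ∧ (j : ZMod n) * t = k * t := by
    unfold spoke at h; split_ifs at h <;> simp_all [- Int.not_even_iff_odd]
  have hmod : (n : ℤ) ∣ j - k :=
    (ZMod.intCast_eq_intCast_iff_dvd_sub k j n).mp
      ((ZMod.isUnit_iff_coprime t n).mpr ht.symm |>.mul_right_cancel hsame.2).symm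
  have htwo : (2 : ℤ) ∣ j - k := (Int.even_sub.mpr hsame.1).two_dvd
  have hcop : IsCoprime (2 : ℤ) n := Nat.isCoprime_iff_coprime.mpr (Nat.coprime_two_left.mpr hn)
  exact sub_eq_zero.mp (Int.eq_zero_of_abs_lt_dvd (hcop.mul_dvd htwo hmod) hlt)

theorem exists_even_lt_mul_eq_one (hn : Odd n) (ht : n.Coprime t) :
    ∃ a, Even a ∧ a < 2 * n ∧ (a : ZMod n) * t = 1 := by
  have : NeZero n := ⟨hn.pos.ne'⟩
  set b := ((2 * t : ℕ) : ZMod n)⁻¹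
  refine ⟨2 * b.val, even_two_mul _, by linarith [b.val_lt], ?_⟩
  have h2t : ((2 * t : ℕ) : ZMod n) * b = 1 :=
    ZMod.coe_mul_inv_eq_one _ (Nat.Coprime.mul_left (Nat.coprime_two_left.mpr hn) ht.symm)
  push_cast at h2t ⊢
  rw [ZMod.natCast_zmod_val]
  linear_combination h2t

def hamCycle (n t a k : ℕ) : DPVert n :=
  if k < n then .x (k + 1)
  else if k < n + a then spoke n t (k - n)
  else if k < 2 * n + a then .y (k + 1 - a - t)
  else spoke n t (2 * n + a - 1 - k)

theorem hamCycle_adj_succ [Fact (1 < n)] (ha : Even a) (hat : (a : ZMod n) * t = 1) (k : ℕ)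
    (hk : k + 1 < 4 * n) : (DP n t).Adj (hamCycle n t a k) (hamCycle n t a (k + 1)) := by
  have ha0 : a ≠ 0 := by rintro rfl; simp at hat
  unfold hamCycle
  split_ifs <;> try omega
  · push_cast
    exact adj_x_succ _
  · obtain rfl : n = k + 1 := by omega
    simpa [spoke] using adj_x_u (t := t) 0
  · rw [show ((k + 1 : ℕ) : ℤ) - n = (k - n) + 1 by push_cast; ring]
    exact spoke_adj_succ _
  · obtain rfl : k = n + a - 1 := by omega
    have hodd : ¬Even ((a : ℤ) - 1) := by rw [Int.even_sub_one, not_not]; exact_mod_cast ha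
    rw [show ((n + a - 1 : ℕ) : ℤ) - n = a - 1 by omega]
    simp only [spoke, if_neg hodd]
    convert (adj_y_v (t := t) (1 - t : ZMod n)).symm using 2
    · push_cast; linear_combination hat
    · rw [show n + a - 1 + 1 = n + a by omega]; push_cast; simp
  · rw [show ((k + 1 : ℕ) : ZMod n) + 1 - a - t = ((k : ZMod n) + 1 - a - t) + 1 by
      push_cast; ring]
    exact adj_y_succ _
  · obtain rfl : k = 2 * n + a - 1 := by omega
    rw [show (2 * n + a - 1 : ℤ) - ((2 * n + a - 1 + 1 : ℕ) : ℤ) = -1 by omega]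
    simp only [spoke, show ¬Even (-1 : ℤ) by decide, if_false]
    convert adj_y_v (t := t) (-t : ZMod n) using 2
    · rw [← Nat.cast_succ, show (2 * n + a - 1).succ = 2 * n + a by omega]; push_cast; simp
    · push_cast; ring
  · rw [show (2 * n + a - 1 : ℤ) - k = (2 * n + a - 1 - ((k + 1 : ℕ) : ℤ)) + 1 by
      push_cast; ring]
    exact (spoke_adj_succ _).symm

theorem hamCycle_adj_last (ha : Even a) (hat : (a : ZMod n) * t = 1) (ha2n : a < 2 * n) :
    (DP n t).Adj (hamCycle n t a (4 * n - 1)) (hamCycle n t a 0) := by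
  have heven : Even ((a : ℤ) - 2 * n) := by
    rw [Int.even_sub]; exact iff_of_true (mod_cast ha) (even_two_mul _)
  unfold hamCycle
  rw [if_neg (by omega), if_neg (by omega), if_neg (by omega), if_pos (by omega),
    show (2 * n + a - 1 : ℤ) - ((4 * n - 1 : ℕ) : ℤ) = a - 2 * n by omega]
  simp only [spoke, if_pos heven]
  convert (adj_x_u (t := t) (1 : ZMod n)).symm using 2
  · push_cast; simp [hat]
  · simp

theorem hamCycle_injOn (hn : Odd n) (ht : n.Coprime t) (ha2n : a < 2 * n) :
    Set.InjOn (hamCycle n t a) (Set.Iio (4 * n)) := by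
  intro k hk l hl h
  simp only [Set.mem_Iio] at hk hl
  unfold hamCycle at h
  split_ifs at h <;> first
    | exact absurd h (spoke_ne_x _ _) | exact absurd h.symm (spoke_ne_x _ _)
    | exact absurd h (spoke_ne_y _ _) | exact absurd h.symm (spoke_ne_y _ _)
    | simp at h; done
    | skip
  all_goals first
    | have := eq_of_spoke_eq hn ht h (abs_sub_lt_iff.mpr ⟨by omega, by omega⟩); omega
    | have hkl : ((k : ℤ) : ZMod n) = (l : ℤ) := by push_cast; simpa using h
      have := ZMod.eq_of_intCast_eq_of_abs_sub_lt hkl (abs_sub_lt_iff.mpr ⟨by omega, by omega⟩)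
      omega

end DP

theorem DP_hamiltonian_of_odd_coprime_general (n t : ℕ) (hn : 3 ≤ n) (hodd : Odd n)
    (hgcd : Nat.gcd n t = 1) :
    ∃ (a : DPVert n) (w : (DP n t).Walk a a), w.IsHamiltonianCycle := by
  have : Fact (1 < n) := ⟨by omega⟩
  obtain ⟨a, ha, ha2n, hat⟩ := DP.exists_even_lt_mul_eq_one hodd hgcd
  exact exists_isHamiltonianCycle_of_injOn (by omega) DPVert.card_eq (DP.hamCycle n t a)
    (DP.hamCycle_injOn hodd hgcd ha2n) (DP.hamCycle_adj_succ ha hat)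
    (DP.hamCycle_adj_last ha hat ha2n)

theorem DP_hamiltonian_of_odd_coprime (n t : ℕ) (hn : 3 ≤ n) (hodd : Odd n)
    (hgcd : Nat.gcd n t = 1) (ht : 2 ≤ 2 * t) (htn : 2 * t < n) :
    ∃ (a : DPVert n) (w : (DP n t).Walk a a), w.IsHamiltonianCycle :=
  DP_hamiltonian_of_odd_coprime_general n t hn hodd hgcd
end

section
/- Let n be odd with gcd(n, t) = 2k+1 and a_0, ..., a_{2k} as in the standard construction. Then the paths R_0, ..., R_{2k}, S_0, ..., S_{2k} (alternating u–v paths of step t starting and ending as specified) together contain every vertex u_m and v_m of DP(n, t), m ∈ ℤ_n, exactly once. -/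
/-- `a 0, a 1, …, a (2k)` is a "standard construction" sequence:
each `a i` lies in `{0, …, n-1}`, is congruent to `i` mod `2k+1`, and
`a 0 < a 2 < ⋯ < a (2k) < a 1 < a 3 < ⋯ < a (2k-1)`. -/
def GoodSeq (n k : ℕ) (a : ℕ → ℕ) : Prop :=
  (∀ i ≤ 2 * k, a i < n ∧ a i % (2 * k + 1) = i % (2 * k + 1)) ∧
  (∀ j, j < k → a (2 * j) < a (2 * j + 2)) ∧
  (0 < k → a (2 * k) < a 1) ∧
  (∀ j, j + 1 < k → a (2 * j + 1) < a (2 * j + 3))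

/-- Vertex list of the path `R_i : u_{a_{i+1}+t-1} v_{a_{i+1}+2t-1} … ` with `r+1` vertices. -/
def Rlist (n t k : ℕ) (a : ℕ → ℕ) (i r : ℕ) : List (DPVert n) :=
  (List.range (r + 1)).map (fun j =>
    if Even j then
      DPVert.u ((a ((i + 1) % (2 * k + 1)) : ZMod n) - 1 + (((j + 1) * t : ℕ) : ZMod n))
    else
      DPVert.v ((a ((i + 1) % (2 * k + 1)) : ZMod n) - 1 + (((j + 1) * t : ℕ) : ZMod n)))

/-- Vertex list of the path `S_i : v_{a_{i+1}-1} u_{a_{i+1}-t-1} … ` with `s+1` vertices. -/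
def Slist (n t k : ℕ) (a : ℕ → ℕ) (i s : ℕ) : List (DPVert n) :=
  (List.range (s + 1)).map (fun j =>
    if Even j then
      DPVert.v ((a ((i + 1) % (2 * k + 1)) : ZMod n) - 1 - ((j * t : ℕ) : ZMod n))
    else
      DPVert.u ((a ((i + 1) % (2 * k + 1)) : ZMod n) - 1 - ((j * t : ℕ) : ZMod n)))

/-- `R_i` ends at `v_{a_i}` and `S_i` ends at `u_{a_i + t}` (both have odd length). -/
def RSEnds (n t k : ℕ) (a : ℕ → ℕ) (i r s : ℕ) : Prop :=
  Odd r ∧ (a ((i + 1) % (2 * k + 1)) : ZMod n) - 1 + (((r + 1) * t : ℕ) : ZMod n) = (a i : ZMod n) ∧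
  Odd s ∧ (a ((i + 1) % (2 * k + 1)) : ZMod n) - 1 - ((s * t : ℕ) : ZMod n) = (a i : ZMod n) + (t : ZMod n)

/-! With `d = gcd n t = 2k+1` and `n = d N`, the inner-rim walk `u_{c+t} v_{c+2t} u_{c+3t} …`
closes up after exactly `2N` steps: position and parity must both return, and `N` is odd.
Its `2N` vertices are precisely the `u_m`, `v_m` with `m ≡ c (mod d)`. `R_i` followed by `S_i`
reversed is this closed walk from `c = a_{i+1} - 1 ≡ i (mod d)`, cut at the unique even
`p < 2N` with `p t ≡ a_i + 1 - a_{i+1} (mod n)`; the ordering of the `a_i` rules out `p = 0`.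
As `i` runs over `ℤ_d` the residues `c` do too, so the walks partition the inner vertices. -/

def zigzag (n t : ℕ) (c : ZMod n) (p : ℕ) : DPVert n :=
  if Even p then .v (c + ((p * t : ℕ) : ZMod n)) else .u (c + ((p * t : ℕ) : ZMod n))

def innerCycle (n t : ℕ) (c : ZMod n) : List (DPVert n) :=
  (List.range (2 * (n / n.gcd t))).map fun p => zigzag n t c (p + 1)

section InnerCycle

variable {n t d : ℕ}

theorem zigzag_eq_zigzag_iff {c c' : ZMod n} {p q : ℕ} :
    zigzag n t c p = zigzag n t c' q ↔
      p ≡ q [MOD 2] ∧ c + ((p * t : ℕ) : ZMod n) = c' + ((q * t : ℕ) : ZMod n) := by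
  unfold zigzag Nat.ModEq
  rcases Nat.even_or_odd p with hp | hp <;> rcases Nat.even_or_odd q with hq | hq <;>
    simp_all [Nat.even_iff, Nat.odd_iff]

theorem natCast_mul_eq_natCast_mul_iff [NeZero n] {p q : ℕ} :
    ((p * t : ℕ) : ZMod n) = ((q * t : ℕ) : ZMod n) ↔ p ≡ q [MOD n / n.gcd t] := by
  rw [ZMod.natCast_eq_natCast_iff]
  refine ⟨Nat.ModEq.cancel_right_div_gcd (NeZero.pos n), fun h => ?_⟩
  obtain ⟨t', ht'⟩ := n.gcd_dvd_right t
  have hdvd : n ∣ n / n.gcd t * t :=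
    ⟨t', by nth_rw 2 [ht']; rw [← mul_assoc, Nat.div_mul_cancel (n.gcd_dvd_left t)]⟩
  exact (h.mul_right' t).of_dvd hdvd

theorem natCast_mul_add_natCast_mul_eq_zero [NeZero n] {p q : ℕ} (h : n / n.gcd t ∣ p + q) :
    ((p * t : ℕ) : ZMod n) + ((q * t : ℕ) : ZMod n) = 0 := by
  rw [← Nat.cast_add, ← add_mul, ← Nat.cast_zero (R := ZMod n), ← zero_mul t,
    natCast_mul_eq_natCast_mul_iff]
  exact Nat.modEq_zero_iff_dvd.mpr h

theorem modEq_of_zigzag_eq (hn : Odd n) {c : ZMod n} {p q : ℕ}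
    (h : zigzag n t c p = zigzag n t c q) : p ≡ q [MOD 2 * (n / n.gcd t)] := by
  have : NeZero n := ⟨hn.pos.ne'⟩
  obtain ⟨hpar, hpos⟩ := zigzag_eq_zigzag_iff.mp h
  have hodd : Odd (n / n.gcd t) := hn.of_dvd_nat (Nat.div_dvd_of_dvd (n.gcd_dvd_left t))
  exact (Nat.modEq_and_modEq_iff_modEq_mul (Nat.coprime_two_left.mpr hodd)).mp
    ⟨hpar, natCast_mul_eq_natCast_mul_iff.mp (add_left_cancel hpos)⟩

theorem cast_eq_of_zigzag_eq (hd : n.gcd t = d) {c c' : ZMod n} {p q : ℕ}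
    (h : zigzag n t c p = zigzag n t c' q) : (c.cast : ZMod d) = c'.cast := by
  have hdn : d ∣ n := hd ▸ n.gcd_dvd_left t
  have ht : ((t : ℕ) : ZMod d) = 0 :=
    (ZMod.natCast_eq_zero_iff _ _).mpr (hd ▸ n.gcd_dvd_right t)
  simpa [ZMod.cast_add hdn, ZMod.cast_mul hdn, ZMod.cast_natCast hdn, ht] using
    congrArg (ZMod.cast : ZMod n → ZMod d) (zigzag_eq_zigzag_iff.mp h).2

theorem exists_natCast_mul_eq [NeZero n] (hd : n.gcd t = d) {w : ZMod n}
    (hw : (w.cast : ZMod d) = 0) : ∃ y : ℕ, ((y * t : ℕ) : ZMod n) = w := by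
  obtain ⟨z, hz⟩ : d ∣ w.val := by
    rwa [ZMod.cast_eq_val, ZMod.natCast_eq_zero_iff] at hw
  -- Bézout: `d = n * A + t * B`
  have hbez : (d : ZMod n) = t * (n.gcdB t : ZMod n) := by
    have := congrArg (Int.cast : ℤ → ZMod n) (Nat.gcd_eq_gcd_ab n t)
    simpa [hd] using this
  refine ⟨((n.gcdB t * z : ℤ) : ZMod n).val, ?_⟩
  rw [Nat.cast_mul, ZMod.natCast_zmod_val, ← ZMod.natCast_zmod_val w, hz]
  push_cast
  rw [hbez]
  ring

theorem exists_lt_modEq_natCast_mul_eq (hn : Odd n) (hd : n.gcd t = d) (e : ℕ) {w : ZMod n}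
    (hw : (w.cast : ZMod d) = 0) :
    ∃ p < 2 * (n / d), p ≡ e [MOD 2] ∧ ((p * t : ℕ) : ZMod n) = w := by
  have : NeZero n := ⟨hn.pos.ne'⟩
  obtain ⟨y, hy⟩ := exists_natCast_mul_eq hd hw
  have hodd : Odd (n / d) := hn.of_dvd_nat (Nat.div_dvd_of_dvd (hd ▸ n.gcd_dvd_left t))
  let p := Nat.chineseRemainder (Nat.coprime_two_left.mpr hodd) e y
  refine ⟨p, Nat.chineseRemainder_lt_mul _ _ _ two_ne_zero hodd.pos.ne', p.2.1, ?_⟩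
  rw [← hy, natCast_mul_eq_natCast_mul_iff, hd]
  exact p.2.2

theorem nodup_innerCycle (hn : Odd n) (c : ZMod n) : (innerCycle n t c).Nodup :=
  List.nodup_range.map_on fun _ hp _ hq h =>
    ((modEq_of_zigzag_eq hn h).add_right_cancel' 1).eq_of_lt_of_lt
      (List.mem_range.mp hp) (List.mem_range.mp hq)

theorem mem_innerCycle_of_cast_eq (hn : Odd n) (hd : n.gcd t = d) {c m : ZMod n}
    (h : (c.cast : ZMod d) = m.cast) :
    DPVert.u m ∈ innerCycle n t c ∧ DPVert.v m ∈ innerCycle n t c := by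
  have hdn : d ∣ n := hd ▸ n.gcd_dvd_left t
  have ht : ((t : ℕ) : ZMod d) = 0 :=
    (ZMod.natCast_eq_zero_iff _ _).mpr (hd ▸ n.gcd_dvd_right t)
  have hw : ((m - c - t).cast : ZMod d) = 0 := by
    rw [ZMod.cast_sub hdn, ZMod.cast_sub hdn, ZMod.cast_natCast hdn, h, ht, sub_self, sub_zero]
  have hreach : ∀ e, ∃ p < 2 * (n / n.gcd t), p ≡ e [MOD 2] ∧
      c + (((p + 1) * t : ℕ) : ZMod n) = m := fun e => by
    obtain ⟨p, hp, hpe, hpt⟩ := exists_lt_modEq_natCast_mul_eq hn hd e hw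
    refine ⟨p, hd ▸ hp, hpe, ?_⟩
    rw [add_mul, one_mul, Nat.cast_add, hpt]
    ring
  simp only [innerCycle, List.mem_map, List.mem_range, zigzag]
  obtain ⟨p, hp, hpe, hpm⟩ := hreach 0
  obtain ⟨q, hq, hqe, hqm⟩ := hreach 1
  refine ⟨⟨p, hp, ?_⟩, ⟨q, hq, ?_⟩⟩
  · rw [if_neg (by rw [Nat.even_iff]; unfold Nat.ModEq at hpe; omega), hpm]
  · rw [if_pos (by rw [Nat.even_iff]; unfold Nat.ModEq at hqe; omega), hqm]

variable {c : ℕ → ZMod n}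

theorem nodup_flatMap_innerCycle (hn : Odd n) (hd : n.gcd t = d)
    (hc : ∀ i < d, ((c i).cast : ZMod d) = i) :
    ((List.range d).flatMap fun i => innerCycle n t (c i)).Nodup := by
  refine List.nodup_flatMap.mpr ⟨fun i _ => nodup_innerCycle hn _,
    List.nodup_range.pairwise_of_forall_ne fun i hi j hj hij w hwi hwj => hij ?_⟩
  simp only [innerCycle, List.mem_map, List.mem_range] at hi hj hwi hwj
  obtain ⟨p, -, rfl⟩ := hwi
  obtain ⟨q, -, hq⟩ := hwj
  have hij := cast_eq_of_zigzag_eq hd hq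
  rw [hc i hi, hc j hj, ZMod.natCast_eq_natCast_iff', Nat.mod_eq_of_lt hi,
    Nat.mod_eq_of_lt hj] at hij
  exact hij.symm

theorem mem_flatMap_innerCycle_iff (hn : Odd n) (hd : n.gcd t = d)
    (hc : ∀ i < d, ((c i).cast : ZMod d) = i) {w : DPVert n} :
    w ∈ (List.range d).flatMap (fun i => innerCycle n t (c i)) ↔
      (∃ m, w = DPVert.u m) ∨ (∃ m, w = DPVert.v m) := by
  constructor
  · simp only [List.mem_flatMap, innerCycle, List.mem_map, zigzag]
    rintro ⟨i, -, p, -, rfl⟩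
    split_ifs
    exacts [Or.inr ⟨_, rfl⟩, Or.inl ⟨_, rfl⟩]
  · have : NeZero d := ⟨hd ▸ (Nat.gcd_pos_of_pos_left t hn.pos).ne'⟩
    have hmem : ∀ m : ZMod n, ∃ i ∈ List.range d,
        DPVert.u m ∈ innerCycle n t (c i) ∧ DPVert.v m ∈ innerCycle n t (c i) := fun m =>
      ⟨_, List.mem_range.mpr (ZMod.val_lt (m.cast : ZMod d)), mem_innerCycle_of_cast_eq hn hd
        (by rw [hc _ (ZMod.val_lt _), ZMod.natCast_zmod_val])⟩
    rintro (⟨m, rfl⟩ | ⟨m, rfl⟩) <;> obtain ⟨i, hi, hu, hv⟩ := hmem m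
    exacts [List.mem_flatMap.mpr ⟨i, hi, hu⟩, List.mem_flatMap.mpr ⟨i, hi, hv⟩]

end InnerCycle

section Paths

variable {n t k : ℕ} {a : ℕ → ℕ} {i r s : ℕ}

theorem Rlist_eq : Rlist n t k a i r = (List.range (r + 1)).map
    fun j => zigzag n t ((a ((i + 1) % (2 * k + 1)) : ZMod n) - 1) (j + 1) := by
  refine List.map_congr_left fun j _ => ?_
  by_cases hj : Even j <;> simp [zigzag, Nat.even_add_one, hj]

theorem Slist_reverse_eq [NeZero n] (h : r + s + 2 = 2 * (n / n.gcd t)) :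
    (Slist n t k a i s).reverse = (List.range (s + 1)).map
      fun j => zigzag n t ((a ((i + 1) % (2 * k + 1)) : ZMod n) - 1) (r + 1 + j + 1) := by
  rw [Slist, ← List.map_reverse, List.range_eq_range', List.reverse_range', List.map_map,
    ← List.range_eq_range']
  refine List.map_congr_left fun j hj => ?_
  have hj : j < s + 1 := List.mem_range.mp hj
  have hsum : s - j + (r + 1 + j + 1) = 2 * (n / n.gcd t) := by omega
  have hpar : Even (s - j) ↔ Even (r + 1 + j + 1) :=
    Nat.even_add.mp (hsum ▸ even_two_mul _)
  have hpos := natCast_mul_add_natCast_mul_eq_zero (t := t) (n := n) (hsum ▸ dvd_mul_left _ _)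
  have hpos' : (a ((i + 1) % (2 * k + 1)) : ZMod n) - 1 - (((s - j) * t : ℕ) : ZMod n) =
      (a ((i + 1) % (2 * k + 1)) : ZMod n) - 1 + (((r + 1 + j + 1) * t : ℕ) : ZMod n) := by
    linear_combination -hpos
  by_cases he : Even (r + 1 + j + 1) <;>
    simp only [Function.comp, zero_add, Nat.add_sub_cancel, zigzag, hpar, he, hpos', if_true,
      if_false]

theorem Rlist_append_Slist_perm [NeZero n] (h : r + s + 2 = 2 * (n / n.gcd t)) :
    (Rlist n t k a i r ++ Slist n t k a i s).Perm
      (innerCycle n t ((a ((i + 1) % (2 * k + 1)) : ZMod n) - 1)) := by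
  rw [innerCycle, ← h, show r + s + 2 = (r + 1) + (s + 1) by ring, List.range_add,
    List.map_append, List.map_map, Rlist_eq]
  refine ((List.reverse_perm _).symm.append_left _).trans (List.Perm.of_eq ?_)
  rw [Slist_reverse_eq h]
  rfl

end Paths

theorem eq_of_natCast_add_one_eq_natCast {n x y : ℕ} (hx : x < n) (hy : y < n)
    (h : (x : ZMod n) + 1 = y) : x + 1 = y ∨ (x + 1 = n ∧ y = 0) := by
  rw [← Nat.cast_succ, ZMod.natCast_eq_natCast_iff', Nat.mod_eq_of_lt hy] at h
  rcases (Nat.succ_le_of_lt hx).lt_or_eq with hlt | heq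
  · exact Or.inl (by rwa [Nat.mod_eq_of_lt hlt] at h)
  · exact Or.inr ⟨heq, by rwa [heq, Nat.mod_self, eq_comm] at h⟩

namespace GoodSeq

variable {n k : ℕ} {a : ℕ → ℕ}

theorem natCast_eq (ha : GoodSeq n k a) {i : ℕ} (hi : i ≤ 2 * k) :
    ((a i : ℕ) : ZMod (2 * k + 1)) = i :=
  (ZMod.natCast_eq_natCast_iff' _ _ _).mpr (ha.1 i hi).2

theorem natCast_succ_mod_eq (ha : GoodSeq n k a) (i : ℕ) :
    ((a ((i + 1) % (2 * k + 1)) : ℕ) : ZMod (2 * k + 1)) = i + 1 := by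
  rw [ha.natCast_eq (Nat.le_of_lt_succ (Nat.mod_lt _ (Nat.succ_pos _))), ZMod.natCast_mod,
    Nat.cast_succ]

theorem strictMonoOn_even (ha : GoodSeq n k a) :
    StrictMonoOn (fun j => a (2 * j)) (Set.Iic k) :=
  strictMonoOn_Iic_of_lt_succ fun j hj => by
    simpa [Order.succ_eq_add_one, mul_add] using ha.2.1 j hj

theorem strictMonoOn_odd (ha : GoodSeq n k a) :
    StrictMonoOn (fun j => a (2 * j + 1)) (Set.Iic (k - 1)) :=
  strictMonoOn_Iic_of_lt_succ fun j hj => by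
    simpa [Order.succ_eq_add_one, mul_add] using ha.2.2.2 j (by omega)

theorem evens_lt_odds (ha : GoodSeq n k a) {j : ℕ} (hj : j < k) :
    a (2 * j + 2) ≤ a (2 * k) ∧ a (2 * k) < a 1 ∧ a 1 ≤ a (2 * j + 1) := by
  have heven := ha.strictMonoOn_even.monotoneOn (Set.mem_Iic.mpr hj) (Set.mem_Iic.mpr le_rfl) hj
  have hodd := ha.strictMonoOn_odd.monotoneOn (Set.mem_Iic.mpr (Nat.zero_le _))
    (Set.mem_Iic.mpr (by omega : j ≤ k - 1)) (Nat.zero_le j)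
  exact ⟨by simpa [mul_add] using heven, ha.2.2.1 (by omega), by simpa using hodd⟩

theorem natCast_add_one_ne (ha : GoodSeq n k a) (hn : 1 < n) {i : ℕ} (hi : i < 2 * k + 1) :
    (a i : ZMod n) + 1 ≠ a ((i + 1) % (2 * k + 1)) := by
  have hlt : ∀ j ≤ 2 * k, a j < n := fun j hj => (ha.1 j hj).1
  intro h
  rcases Nat.lt_succ_iff_lt_or_eq.mp hi with hi | rfl
  · rw [Nat.mod_eq_of_lt (by omega)] at h
    have := eq_of_natCast_add_one_eq_natCast (hlt i (by omega)) (hlt (i + 1) (by omega)) h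
    rcases Nat.even_or_odd' i with ⟨j, rfl | rfl⟩
    · have := ha.evens_lt_odds (j := j) (by omega)
      have := ha.2.1 j (by omega)
      omega
    · rw [show 2 * j + 1 + 1 = 2 * j + 2 by ring] at this
      have := ha.evens_lt_odds (j := j) (by omega)
      have hne : a (2 * j + 2) ≠ 0 := fun h0 => by
        have hres := (ha.1 (2 * j + 2) (by omega)).2
        rw [h0, Nat.zero_mod, Nat.mod_eq_of_lt (by omega)] at hres
        omega
      omega
  · rw [Nat.mod_self] at h
    have := eq_of_natCast_add_one_eq_natCast (hlt (2 * k) le_rfl) (hlt 0 (Nat.zero_le _)) h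
    rcases k.eq_zero_or_pos with rfl | hk
    · simp only [mul_zero] at this
      omega
    · have := ha.strictMonoOn_even.monotoneOn (Set.mem_Iic.mpr (Nat.zero_le _))
        (Set.mem_Iic.mpr le_rfl) (Nat.zero_le k)
      have := ha.2.2.1 hk
      have := hlt 1 (by omega)
      simp only [mul_zero] at *
      omega

end GoodSeq

theorem exists_RSEnds_perm_innerCycle {n t k : ℕ} {a : ℕ → ℕ} (hn : Odd n) (hn1 : 1 < n)
    (hgcd : n.gcd t = 2 * k + 1) (ha : GoodSeq n k a) {i : ℕ} (hi : i < 2 * k + 1) :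
    ∃ r s, RSEnds n t k a i r s ∧ (Rlist n t k a i r ++ Slist n t k a i s).Perm
      (innerCycle n t ((a ((i + 1) % (2 * k + 1)) : ZMod n) - 1)) := by
  have : NeZero n := ⟨hn.pos.ne'⟩
  have hdn : 2 * k + 1 ∣ n := hgcd ▸ n.gcd_dvd_left t
  have hw : (((a i : ZMod n) + 1 - a ((i + 1) % (2 * k + 1))).cast : ZMod (2 * k + 1)) = 0 := by
    rw [ZMod.cast_sub hdn, ZMod.cast_add hdn, ZMod.cast_natCast hdn, ZMod.cast_natCast hdn,
      ZMod.cast_one hdn, ha.natCast_eq (by omega), ha.natCast_succ_mod_eq, sub_self]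
  obtain ⟨p, hp, hpe, hpt⟩ := exists_lt_modEq_natCast_mul_eq hn hgcd 0 hw
  rw [← hgcd] at hp
  have hp0 : p ≠ 0 := by
    rintro rfl
    exact ha.natCast_add_one_ne hn1 hi (sub_eq_zero.mp (by simpa using hpt.symm))
  have hsum : p + (2 * (n / n.gcd t) - p) = 2 * (n / n.gcd t) := by omega
  have hperiod := natCast_mul_add_natCast_mul_eq_zero (t := t) (hsum ▸ dvd_mul_left _ _)
  unfold Nat.ModEq at hpe
  refine ⟨p - 1, 2 * (n / n.gcd t) - p - 1, ⟨?_, ?_, ?_, ?_⟩,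
    Rlist_append_Slist_perm (by omega)⟩
  · exact Nat.odd_iff.mpr (by omega)
  · rw [Nat.sub_add_cancel (by omega), hpt]
    ring
  · exact Nat.odd_iff.mpr (by omega)
  · have hs : ((2 * (n / n.gcd t) - p) * t : ℕ) = (2 * (n / n.gcd t) - p - 1) * t + t := by
      rw [← Nat.succ_mul, Nat.succ_eq_add_one, Nat.sub_add_cancel (by omega)]
    rw [hs, Nat.cast_add, hpt] at hperiod
    linear_combination -hperiod

theorem R_S_paths_cover_inner_general (n t k : ℕ) (hn : 3 ≤ n)
    (hodd : Odd n) (hgcd : Nat.gcd n t = 2 * k + 1)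
    (a : ℕ → ℕ) (ha : GoodSeq n k a) :
    ∃ r s : ℕ → ℕ, (∀ i < 2 * k + 1, RSEnds n t k a i (r i) (s i)) ∧
      ((List.range (2 * k + 1)).flatMap
        (fun i => Rlist n t k a i (r i) ++ Slist n t k a i (s i))).Nodup ∧
      ∀ w : DPVert n,
        ((∃ m, w = DPVert.u m) ∨ (∃ m, w = DPVert.v m)) ↔
          w ∈ (List.range (2 * k + 1)).flatMap
            (fun i => Rlist n t k a i (r i) ++ Slist n t k a i (s i)) := by
  have hpaths : ∀ i, ∃ r s, i < 2 * k + 1 → RSEnds n t k a i r s ∧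
      (Rlist n t k a i r ++ Slist n t k a i s).Perm
        (innerCycle n t ((a ((i + 1) % (2 * k + 1)) : ZMod n) - 1)) := fun i => by
    by_cases hi : i < 2 * k + 1
    · obtain ⟨r, s, h⟩ := exists_RSEnds_perm_innerCycle hodd (by omega) hgcd ha hi
      exact ⟨r, s, fun _ => h⟩
    · exact ⟨0, 0, fun h => absurd h hi⟩
  choose r s hrs using hpaths
  have hdn : 2 * k + 1 ∣ n := hgcd ▸ n.gcd_dvd_left t
  have hbase : ∀ i < 2 * k + 1,
      (((a ((i + 1) % (2 * k + 1)) : ZMod n) - 1).cast : ZMod (2 * k + 1)) = i := fun i hi => by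
    rw [ZMod.cast_sub hdn, ZMod.cast_natCast hdn, ZMod.cast_one hdn, ha.natCast_succ_mod_eq,
      add_sub_cancel_right]
  have hperm := List.Perm.flatMap_left (List.range (2 * k + 1)) fun i hi =>
    (hrs i (List.mem_range.mp hi)).2
  refine ⟨r, s, fun i hi => (hrs i hi).1, hperm.nodup_iff.mpr ?_, fun w => ?_⟩
  · exact nodup_flatMap_innerCycle hodd hgcd hbase
  · rw [hperm.mem_iff, mem_flatMap_innerCycle_iff hodd hgcd hbase]

theorem R_S_paths_cover_inner (n t k : ℕ) (hn : 3 ≤ n) (ht : 2 ≤ 2 * t) (htn : 2 * t < n)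
    (hodd : Odd n) (hgcd : Nat.gcd n t = 2 * k + 1)
    (a : ℕ → ℕ) (ha : GoodSeq n k a) :
    ∃ r s : ℕ → ℕ, (∀ i < 2 * k + 1, RSEnds n t k a i (r i) (s i)) ∧
      ((List.range (2 * k + 1)).flatMap
        (fun i => Rlist n t k a i (r i) ++ Slist n t k a i (s i))).Nodup ∧
      ∀ w : DPVert n,
        ((∃ m, w = DPVert.u m) ∨ (∃ m, w = DPVert.v m)) ↔
          w ∈ (List.range (2 * k + 1)).flatMap
            (fun i => Rlist n t k a i (r i) ++ Slist n t k a i (s i)) :=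
  R_S_paths_cover_inner_general n t k hn hodd hgcd a ha
end
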